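/- arXiv:1212.3449 — 2 statements merged into one kernel-verified Lean document; each statement's English description precedes it below -/
import Mathlib

section
/- Let d_k denote the k-th base-4 digit of the Stoneham number α_{2,3} = ∑_{n≥1} 1/(3^n·2^{3^n}). Then for every integer n ≥ 0 and every k with 3(3^n+1)/2 ≤ k ≤ 3(3^n+1)/2 + 3^n − 1, one has d_k = d_{3^n + k} = d_{2·3^n + k}. -/
/-- The Stoneham number `α_{b,c} = ∑_{n≥1} 1/(c^n · b^(c^n))`. -/
noncomputable def stoneham (b c : ℕ) : ℝ :=
  ∑' n : ℕ, 1 / ((c : ℝ) ^ (n + 1) * (b : ℝ) ^ (c ^ (n + 1)))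

/-- The `k`-th base-`b` digit of a real number `x ∈ [0,1)`:
`digit b x k = ⌊x · b^k⌋ mod b`. -/
noncomputable def digit (b : ℕ) (x : ℝ) (k : ℕ) : ℕ :=
  (⌊x * (b : ℝ) ^ k⌋ % (b : ℤ)).toNat

/-!
Write `α = α_{2,3}` and `N = n + 1`. For `3^N ≤ e ≤ 3^(N+1) + 1`, the first `N` terms of `α · 2^e`
sum to `S / 3^N` for an integer `S = stonehamNumerator N e`, while the remaining terms sum to less
than `1 / 3^N`; hence `⌊α · 2^e⌋ = S / 3^N`. Moving from `k` to `k + j` multiplies `S` by `4^j`, and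
`4^j ≡ 1 (mod 3^N)` as soon as `3^n ∣ j` (lifting the exponent). Since `4 ∣ S` in the range of the
theorem, `⌊4^j S / 3^N⌋ ≡ ⌊S / 3^N⌋ (mod 4)`, so the base-4 digit does not change.
-/

theorem Int.floor_eq_natCast_div_of_le_of_lt {K : Type*} [Field K] [LinearOrder K]
    [IsStrictOrderedRing K] [FloorRing K] {y : K} {S d : ℕ} (hd : 0 < d)
    (hlo : (S : K) ≤ d * y) (hhi : d * y < S + 1) : ⌊y⌋ = ((S / d : ℕ) : ℤ) := by
  have hfloor : ⌊(d : K) * y⌋ = S := by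
    rw [Int.floor_eq_iff]; push_cast; exact ⟨hlo, hhi⟩
  have hy : y = (d : K) * y / d := by field_simp
  rw [hy, Int.floor_div_natCast, hfloor]
  push_cast; rfl

theorem Nat.pow_succ_dvd_pow_sub_one {p x n j : ℕ} [Fact p.Prime] (hp : Odd p) (hx : 1 < x)
    (hpx : p ∣ x - 1) (hj : p ^ n ∣ j) : p ^ (n + 1) ∣ x ^ j - 1 := by
  rcases eq_or_ne j 0 with rfl | hj0
  · simp
  have hpx' : ¬ p ∣ x := fun h => by
    have h1 : p ∣ x - (x - 1) := Nat.dvd_sub h hpx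
    rw [Nat.sub_sub_self hx.le, Nat.dvd_one] at h1
    exact (Fact.out : p.Prime).ne_one h1
  have hv := padicValNat.pow_sub_pow (y := 1) hp hx (by simpa using hpx) hpx' hj0
  rw [one_pow] at hv
  rw [padicValNat_dvd_iff_le (Nat.sub_ne_zero_of_lt (Nat.one_lt_pow hj0 hx)), hv]
  have h1 : 1 ≤ padicValNat p (x - 1) := one_le_padicValNat_of_dvd (by omega) hpx
  have h2 : n ≤ padicValNat p j := (padicValNat_dvd_iff_le hj0).mp hj
  omega

open Finset

noncomputable def stonehamTerm (m : ℕ) : ℝ := 1 / (3 ^ (m + 1) * 2 ^ 3 ^ (m + 1))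

def stonehamNumerator (N e : ℕ) : ℕ :=
  ∑ m ∈ range N, 3 ^ (N - (m + 1)) * 2 ^ (e - 3 ^ (m + 1))

theorem stoneham_two_three_eq_tsum : stoneham 2 3 = ∑' m, stonehamTerm m := by
  simp [stoneham, stonehamTerm]

theorem stonehamTerm_pos (m : ℕ) : 0 < stonehamTerm m := by
  unfold stonehamTerm; positivity

theorem summable_stonehamTerm : Summable stonehamTerm := by
  refine Summable.of_nonneg_of_le (fun m => (stonehamTerm_pos m).le) (fun m => ?_)
    (summable_geometric_of_lt_one (r := (1 / 3 : ℝ)) (by norm_num) (by norm_num))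
  rw [stonehamTerm, one_div_pow]
  gcongr
  calc (3 : ℝ) ^ m ≤ 3 ^ (m + 1) := pow_le_pow_right₀ (by norm_num) m.le_succ
    _ ≤ 3 ^ (m + 1) * 2 ^ 3 ^ (m + 1) :=
        le_mul_of_one_le_right (by positivity) (one_le_pow₀ (by norm_num))

theorem stonehamNumerator_cast {N e : ℕ} (h : 3 ^ N ≤ e) :
    (stonehamNumerator N e : ℝ) = 3 ^ N * 2 ^ e * ∑ m ∈ range N, stonehamTerm m := by
  rw [stonehamNumerator, mul_sum, Nat.cast_sum]
  refine sum_congr rfl fun m hm => ?_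
  have hmN : m + 1 ≤ N := mem_range.mp hm
  have hme : 3 ^ (m + 1) ≤ e := (Nat.pow_le_pow_right (by norm_num) hmN).trans h
  push_cast
  rw [pow_sub₀ _ (by norm_num) hmN, pow_sub₀ _ (by norm_num) hme, stonehamTerm]
  field_simp

theorem stonehamNumerator_add {N e : ℕ} (h : 3 ^ N ≤ e) (i : ℕ) :
    stonehamNumerator N (e + i) = 2 ^ i * stonehamNumerator N e := by
  rw [stonehamNumerator, stonehamNumerator, mul_sum]
  refine sum_congr rfl fun m hm => ?_
  have hme : 3 ^ (m + 1) ≤ e := (Nat.pow_le_pow_right (by norm_num) (mem_range.mp hm)).trans h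
  rw [Nat.sub_add_comm hme, pow_add]
  ring

theorem three_pow_add_le (a j : ℕ) : 3 ^ a + 2 * j ≤ 3 ^ (a + j) := by
  induction j with
  | zero => simp
  | succ j ih =>
    have : 1 ≤ 3 ^ (a + j) := Nat.one_le_pow _ _ (by norm_num)
    rw [← add_assoc, pow_succ]
    omega

theorem scaled_stonehamTerm_add_le {N e : ℕ} (he : e ≤ 3 ^ (N + 1) + 1) (j : ℕ) :
    3 ^ N * 2 ^ e * stonehamTerm (j + N) ≤ 2 / 3 * (1 / 4) ^ j := by
  have h3 : 3 ^ (N + 1) ≤ 3 ^ (j + N + 1) := Nat.pow_le_pow_right (by norm_num) (by omega)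
  have h2 : e + 2 * j ≤ 3 ^ (j + N + 1) + 1 := by
    have := three_pow_add_le (N + 1) j
    rw [show N + 1 + j = j + N + 1 by ring] at this
    omega
  have hnat : 3 ^ N * 2 ^ e * (3 * 4 ^ j) ≤ 2 * (3 ^ (j + N + 1) * 2 ^ 3 ^ (j + N + 1)) := by
    calc 3 ^ N * 2 ^ e * (3 * 4 ^ j) = 3 ^ (N + 1) * 2 ^ (e + 2 * j) := by
          rw [pow_succ, pow_add, pow_mul]; norm_num; ring
      _ ≤ 3 ^ (j + N + 1) * 2 ^ (3 ^ (j + N + 1) + 1) := by gcongr; norm_num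
      _ = _ := by ring
  rw [stonehamTerm, mul_one_div, one_div_pow, mul_one_div, div_div,
    div_le_div_iff₀ (by positivity) (by positivity)]
  exact_mod_cast hnat

theorem scaled_stonehamTail_lt_one {N e : ℕ} (he : e ≤ 3 ^ (N + 1) + 1) :
    3 ^ N * 2 ^ e * ∑' j, stonehamTerm (j + N) < 1 := by
  have hgeom :=
    (hasSum_geometric_of_lt_one (r := (1 / 4 : ℝ)) (by norm_num) (by norm_num)).mul_left (2 / 3)
  rw [show (2 / 3 : ℝ) * (1 - 1 / 4)⁻¹ = 8 / 9 by norm_num] at hgeom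
  rw [← tsum_mul_left]
  calc ∑' j, 3 ^ N * 2 ^ e * stonehamTerm (j + N) ≤ 8 / 9 :=
        hasSum_le (scaled_stonehamTerm_add_le he)
          (((summable_nat_add_iff N).mpr summable_stonehamTerm).mul_left _).hasSum hgeom
    _ < 1 := by norm_num

theorem floor_stoneham_two_three_mul_two_pow {N e : ℕ} (hlo : 3 ^ N ≤ e)
    (hhi : e ≤ 3 ^ (N + 1) + 1) :
    ⌊stoneham 2 3 * 2 ^ e⌋ = ((stonehamNumerator N e / 3 ^ N : ℕ) : ℤ) := by
  have hsplit : (3 ^ N : ℕ) * (stoneham 2 3 * 2 ^ e)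
      = stonehamNumerator N e + 3 ^ N * 2 ^ e * ∑' j, stonehamTerm (j + N) := by
    rw [stoneham_two_three_eq_tsum, ← summable_stonehamTerm.sum_add_tsum_nat_add N,
      stonehamNumerator_cast hlo]
    push_cast; ring
  have htail_nonneg : 0 ≤ 3 ^ N * 2 ^ e * ∑' j, stonehamTerm (j + N) :=
    mul_nonneg (by positivity) (tsum_nonneg fun j => (stonehamTerm_pos _).le)
  apply Int.floor_eq_natCast_div_of_le_of_lt (by positivity) <;> rw [hsplit]
  · linarith
  · linarith [scaled_stonehamTail_lt_one hhi]

theorem digit_stoneham_two_three {N k : ℕ} (hlo : 3 ^ N ≤ 2 * k)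
    (hhi : 2 * k ≤ 3 ^ (N + 1) + 1) :
    digit 4 (stoneham 2 3) k = stonehamNumerator N (2 * k) / 3 ^ N % 4 := by
  have h := floor_stoneham_two_three_mul_two_pow hlo hhi
  rw [pow_mul, show (2 : ℝ) ^ 2 = 4 by norm_num] at h
  rw [digit, Nat.cast_ofNat (R := ℝ), h, ← Int.natCast_mod, Int.toNat_natCast]

theorem digit_stoneham_two_three_add {n k j : ℕ} (hlo : 3 ^ (n + 1) + 2 ≤ 2 * k)
    (hhi : 2 * (j + k) ≤ 3 ^ (n + 2) + 1) (hj : 3 ^ n ∣ j) :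
    digit 4 (stoneham 2 3) (j + k) = digit 4 (stoneham 2 3) k := by
  have h3 : 3 ^ (n + 2) = 3 * 3 ^ (n + 1) := pow_succ' 3 (n + 1)
  have h3' : 3 ^ (n + 1 + 1) = 3 ^ (n + 2) := rfl
  obtain ⟨t, ht⟩ : 3 ^ (n + 1) ∣ 4 ^ j - 1 :=
    Nat.pow_succ_dvd_pow_sub_one (p := 3) (by decide) (by norm_num) (by norm_num) hj
  have h4j : 4 ^ j = 1 + 3 ^ (n + 1) * t := by
    have := Nat.one_le_pow j 4 (by norm_num); omega
  have hshift : stonehamNumerator (n + 1) (2 * (j + k))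
      = 4 ^ j * stonehamNumerator (n + 1) (2 * k) := by
    rw [show 2 * (j + k) = 2 * k + 2 * j by ring, stonehamNumerator_add (by omega), pow_mul]
    rfl
  obtain ⟨S, hS⟩ : 4 ∣ stonehamNumerator (n + 1) (2 * k) := ⟨_, by
    rw [show 2 * k = (2 * k - 2) + 2 by omega, stonehamNumerator_add (by omega)]; rfl⟩
  rw [digit_stoneham_two_three (N := n + 1) (by omega) (by omega),
    digit_stoneham_two_three (N := n + 1) (by omega) (by omega),
    hshift, h4j, hS, add_mul, one_mul, mul_assoc, Nat.add_mul_div_left _ _ (by positivity),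
    mul_left_comm, Nat.add_mul_mod_self_left]

theorem stmt1 (n : ℕ) (k : ℕ) (hk1 : 3 * (3 ^ n + 1) / 2 ≤ k)
    (hk2 : k ≤ 3 * (3 ^ n + 1) / 2 + 3 ^ n - 1) :
    digit 4 (stoneham 2 3) k = digit 4 (stoneham 2 3) (3 ^ n + k) ∧
    digit 4 (stoneham 2 3) k = digit 4 (stoneham 2 3) (2 * 3 ^ n + k) := by
  have hodd : 3 ^ n % 2 = 1 := Nat.odd_iff.mp (Odd.pow (by decide))
  have h3 : 3 ^ (n + 1) = 3 * 3 ^ n := pow_succ' 3 n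
  have h9 : 3 ^ (n + 2) = 9 * 3 ^ n := by rw [pow_add]; ring
  have hlo : 3 ^ (n + 1) + 2 ≤ 2 * k := by omega
  exact ⟨(digit_stoneham_two_three_add hlo (by omega) dvd_rfl).symm,
    (digit_stoneham_two_three_add hlo (by omega) (dvd_mul_left _ _)).symm⟩
end

section
/- Let b ≥ 2 be an integer, p a prime with gcd(b,p) = 1, and m ≥ 1. Set x = ∑_{n=1}^m 1/(p^n·b^{p^n}) and let N = ord_{p^m}(b) be the multiplicative order of b modulo p^m. Then the base-b digit sequence of x is eventually periodic with preperiod length p^m and period N; in particular, for every k > p^m, digit_b(x, k + N) = digit_b(x, k). -/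
theorem Nat.ModEq.div_mod_eq {q b n n' : ℕ} (h : n ≡ n' [MOD q * b]) : n / q % b = n' / q % b := by
  rw [← Nat.mod_mul_right_div_self, ← Nat.mod_mul_right_div_self, h]

theorem Nat.mul_pow_add_modEq {q b N : ℕ} (hN : b ^ N ≡ 1 [MOD q]) (A : ℕ) {j : ℕ} (hj : 1 ≤ j) :
    A * b ^ (j + N) ≡ A * b ^ j [MOD q * b] := by
  obtain ⟨i, rfl⟩ := Nat.exists_eq_add_of_le' hj
  have h := (hN.mul_right' b).mul_left (A * b ^ i)
  rw [one_mul] at h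
  convert h using 1 <;> ring

theorem digit_eq_of_floor_eq {b : ℕ} {x : ℝ} {k n : ℕ} (h : ⌊x * (b : ℝ) ^ k⌋ = n) :
    digit b x k = n % b := by
  rw [digit, h, ← Int.natCast_mod, Int.toNat_natCast]

theorem floor_div_mul_pow {A q b L k : ℕ} (hb : b ≠ 0) (hk : L ≤ k) :
    ⌊(A : ℝ) / (q * (b : ℝ) ^ L) * (b : ℝ) ^ k⌋ = ((A * b ^ (k - L) / q : ℕ) : ℤ) := by
  have hbL : (b : ℝ) ^ L ≠ 0 := pow_ne_zero _ (Nat.cast_ne_zero.mpr hb)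
  have hsplit : (b : ℝ) ^ k = (b : ℝ) ^ (k - L) * (b : ℝ) ^ L := by
    rw [← pow_add, Nat.sub_add_cancel hk]
  have hx : (A : ℝ) / (q * (b : ℝ) ^ L) * (b : ℝ) ^ k = ((A * b ^ (k - L) : ℕ) : ℝ) / (q : ℝ) := by
    rw [hsplit, div_mul_eq_mul_div, ← mul_assoc, mul_div_mul_right _ _ hbL]
    push_cast
    rfl
  rw [hx, ← Int.natCast_floor_eq_floor (by positivity), Nat.floor_div_eq_div]

theorem digit_add_period_of_eq_div {A q b L N : ℕ} (hb : b ≠ 0) (hN : b ^ N ≡ 1 [MOD q])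
    {k : ℕ} (hk : L < k) :
    digit b ((A : ℝ) / (q * (b : ℝ) ^ L)) (k + N) = digit b ((A : ℝ) / (q * (b : ℝ) ^ L)) k := by
  rw [digit_eq_of_floor_eq (floor_div_mul_pow hb (by omega : L ≤ k + N)),
    digit_eq_of_floor_eq (floor_div_mul_pow hb hk.le), Nat.sub_add_comm hk.le]
  exact (Nat.mul_pow_add_modEq hN A (by omega)).div_mod_eq

theorem sum_Icc_inv_pow_mul_pow_eq_div {p b : ℕ} (hp : p ≠ 0) (hb : b ≠ 0) (m : ℕ) :
    ∑ n ∈ Finset.Icc 1 m, 1 / ((p : ℝ) ^ n * (b : ℝ) ^ (p ^ n)) =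
      ((∑ n ∈ Finset.Icc 1 m, p ^ (m - n) * b ^ (p ^ m - p ^ n) : ℕ) : ℝ) /
        ((p : ℝ) ^ m * (b : ℝ) ^ (p ^ m)) := by
  push_cast
  rw [Finset.sum_div]
  refine Finset.sum_congr rfl fun n hn => ?_
  have hnm : n ≤ m := (Finset.mem_Icc.mp hn).2
  have hpow : p ^ n ≤ p ^ m := Nat.pow_le_pow_right (Nat.pos_of_ne_zero hp) hnm
  rw [div_eq_div_iff (by positivity) (by positivity), one_mul, mul_mul_mul_comm, ← pow_add,
    ← pow_add, Nat.sub_add_cancel hnm, Nat.sub_add_cancel hpow]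

theorem stmt14_general (b p m : ℕ) (hb : 2 ≤ b) (hp : p.Prime)
    (x : ℝ) (hx : x = ∑ n ∈ Finset.Icc 1 m, 1 / ((p : ℝ) ^ n * (b : ℝ) ^ (p ^ n)))
    (N : ℕ) (hN : N = orderOf (b : ZMod (p ^ m))) :
    ∀ k, p ^ m < k → digit b x (k + N) = digit b x k := by
  intro k hk
  have hb0 : b ≠ 0 := by omega
  have hbN : b ^ N ≡ 1 [MOD p ^ m] := by
    rw [← ZMod.natCast_eq_natCast_iff, Nat.cast_pow, Nat.cast_one, hN]
    exact pow_orderOf_eq_one _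
  rw [hx, sum_Icc_inv_pow_mul_pow_eq_div hp.ne_zero hb0, ← Nat.cast_pow p m]
  exact digit_add_period_of_eq_div hb0 hbN hk

theorem stmt14 (b p m : ℕ) (hb : 2 ≤ b) (hp : p.Prime) (hbp : Nat.Coprime b p)
    (hm : 1 ≤ m)
    (x : ℝ) (hx : x = ∑ n ∈ Finset.Icc 1 m, 1 / ((p : ℝ) ^ n * (b : ℝ) ^ (p ^ n)))
    (N : ℕ) (hN : N = orderOf (b : ZMod (p ^ m))) :
    ∀ k, p ^ m < k → digit b x (k + N) = digit b x k :=
  stmt14_general b p m hb hp x hx N hN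
end
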